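/- arXiv:2212.13321 — 2 statements merged into one kernel-verified Lean document; each statement's English description precedes it below -/
import Mathlib

section
/- Let γ > 1 and let f : (0,1) → ℝ be continuous and bounded. Suppose u : (0,1) → ℝ is twice differentiable and satisfies x u''(x) + γ u'(x) = f(x) for all x ∈ (0,1), and that sup_{x ∈ (0,1)} |x u'(x)| < ∞. Then sup_{x ∈ (0,1)} |u'(x)| ≤ (1/γ) sup_{x ∈ (0,1)} |f(x)| and sup_{x ∈ (0,1)} |x u''(x)| ≤ 2 sup_{x ∈ (0,1)} |f(x)|. -/
/-!
Multiplying the equation by `x ^ (γ - 1)` puts it in divergence form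
`(x ^ γ u')' = x ^ (γ - 1) f`. If `f ≤ M`, then `x ^ γ (M / γ - u' x)` has derivative
`x ^ (γ - 1) (M - f x) ≥ 0`, so it is monotone; since `x u'` is bounded and `γ > 1`, it tends
to `0` at `0⁺`, hence it is nonnegative and `u' ≤ M / γ`. Applied to `-u'` this gives
`|u'| ≤ M / γ`, and then `|x u''| = |f - γ u'| ≤ 2M`.
-/

open Set Filter Topology

lemma MonotoneOn.le_of_tendsto_nhdsGT {φ : ℝ → ℝ} {a b l x : ℝ} (hφ : MonotoneOn φ (Ioo a b))
    (hlim : Tendsto φ (𝓝[>] a) (𝓝 l)) (hx : x ∈ Ioo a b) : l ≤ φ x := by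
  refine le_of_tendsto hlim ?_
  filter_upwards [Ioo_mem_nhdsGT hx.1] with t ht
  exact hφ ⟨ht.1, ht.2.trans hx.2⟩ hx ht.2.le

lemma hasDerivAt_rpow_mul {γ t v' : ℝ} {v : ℝ → ℝ} (ht : 0 < t) (hv : HasDerivAt v v' t) :
    HasDerivAt (fun s ↦ s ^ γ * v s) (t ^ (γ - 1) * (t * v' + γ * v t)) t := by
  refine ((Real.hasDerivAt_rpow_const (p := γ) (Or.inl ht.ne')).mul hv).congr_deriv ?_
  rw [Real.rpow_sub_one ht.ne']
  field_simp
  ring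

lemma tendsto_rpow_mul_nhdsGT_zero {γ b C : ℝ} {v : ℝ → ℝ} (hγ : 1 < γ) (hb : 0 < b)
    (hC : ∀ t ∈ Ioo 0 b, |t * v t| ≤ C) :
    Tendsto (fun t ↦ t ^ γ * v t) (𝓝[>] 0) (𝓝 0) := by
  have hpow : Tendsto (fun t : ℝ ↦ t ^ (γ - 1)) (𝓝[>] 0) (𝓝 0) := by
    simpa [Real.zero_rpow (sub_pos.2 hγ).ne'] using
      (Real.continuousAt_rpow_const 0 (γ - 1) (Or.inr (sub_pos.2 hγ).le)).tendsto.mono_left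
        nhdsWithin_le_nhds
  have hbdd : IsBoundedUnder (· ≤ ·) (𝓝[>] 0) (fun t ↦ ‖t * v t‖) :=
    isBoundedUnder_of_eventually_le (a := C) <| by
      filter_upwards [Ioo_mem_nhdsGT hb] with t ht using hC t ht
  refine (hpow.zero_mul_isBoundedUnder_le hbdd).congr' ?_
  filter_upwards [self_mem_nhdsWithin] with t (ht : 0 < t)
  rw [Real.rpow_sub_one ht.ne']
  field_simp

lemma le_div_of_degenerate_ode {γ b M C : ℝ} {f u' u'' : ℝ → ℝ} (hγ : 1 < γ) (hb : 0 < b)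
    (hM : ∀ x ∈ Ioo 0 b, f x ≤ M)
    (hu'' : ∀ x ∈ Ioo 0 b, HasDerivAt u' (u'' x) x)
    (heq : ∀ x ∈ Ioo 0 b, x * u'' x + γ * u' x = f x)
    (hC : ∀ x ∈ Ioo 0 b, |x * u' x| ≤ C) {x : ℝ} (hx : x ∈ Ioo 0 b) :
    u' x ≤ M / γ := by
  have hγ0 : 0 < γ := by linarith
  set φ : ℝ → ℝ := fun t ↦ t ^ γ * (M / γ - u' t)
  have hφ' : ∀ t ∈ Ioo 0 b, HasDerivAt φ (t ^ (γ - 1) * (M - f t)) t := by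
    intro t ht
    convert hasDerivAt_rpow_mul ht.1 ((hu'' t ht).const_sub (M / γ)) using 2
    rw [← heq t ht]
    field_simp
    ring
  have hmono : MonotoneOn φ (Ioo 0 b) := by
    refine monotoneOn_of_hasDerivWithinAt_nonneg (convex_Ioo 0 b)
      (fun t ht ↦ (hφ' t ht).continuousAt.continuousWithinAt)
      (fun t ht ↦ (hφ' t (interior_subset ht)).hasDerivWithinAt) ?_
    rw [interior_Ioo]
    exact fun t ht ↦ mul_nonneg (Real.rpow_nonneg ht.1.le _) (sub_nonneg.2 (hM t ht))
  have hlim : Tendsto φ (𝓝[>] 0) (𝓝 0) := by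
    have := ((Real.continuousAt_rpow_const 0 γ (Or.inr hγ0.le)).tendsto.mono_left
      nhdsWithin_le_nhds).const_mul (M / γ) |>.sub (tendsto_rpow_mul_nhdsGT_zero hγ hb hC)
    simp only [Real.zero_rpow hγ0.ne', mul_zero, sub_zero] at this
    refine this.congr fun t ↦ ?_
    simp only [φ]
    ring
  have h0 := hmono.le_of_tendsto_nhdsGT hlim hx
  have hxγ : 0 < x ^ γ := Real.rpow_pos_of_pos hx.1 γ
  simp only [φ] at h0
  nlinarith

lemma abs_le_div_of_degenerate_ode {γ b M C : ℝ} {f u' u'' : ℝ → ℝ} (hγ : 1 < γ) (hb : 0 < b)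
    (hM : ∀ x ∈ Ioo 0 b, |f x| ≤ M)
    (hu'' : ∀ x ∈ Ioo 0 b, HasDerivAt u' (u'' x) x)
    (heq : ∀ x ∈ Ioo 0 b, x * u'' x + γ * u' x = f x)
    (hC : ∀ x ∈ Ioo 0 b, |x * u' x| ≤ C) {x : ℝ} (hx : x ∈ Ioo 0 b) :
    |u' x| ≤ M / γ := by
  refine abs_le.2 ⟨?_, le_div_of_degenerate_ode hγ hb (fun t ht ↦ (abs_le.1 (hM t ht)).2)
    hu'' heq hC hx⟩
  have hneg := le_div_of_degenerate_ode (f := fun t ↦ -f t) (u' := fun t ↦ -u' t)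
    (u'' := fun t ↦ -u'' t) hγ hb (fun t ht ↦ neg_le.2 (abs_le.1 (hM t ht)).1)
    (fun t ht ↦ (hu'' t ht).neg) (fun t ht ↦ by rw [← heq t ht]; ring)
    (fun t ht ↦ by simpa only [mul_neg, abs_neg] using hC t ht) hx
  exact neg_le.1 hneg

theorem degenerate_ode_estimate_general
    (γ : ℝ) (hγ : 1 < γ)
    (f u' u'' : ℝ → ℝ)
    (M : ℝ) (hM : ∀ x ∈ Ioo (0 : ℝ) 1, |f x| ≤ M)
    (hu'' : ∀ x ∈ Ioo (0 : ℝ) 1, HasDerivAt u' (u'' x) x)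
    (heq : ∀ x ∈ Ioo (0 : ℝ) 1, x * u'' x + γ * u' x = f x)
    (hbdd : ∃ C : ℝ, ∀ x ∈ Ioo (0 : ℝ) 1, |x * u' x| ≤ C) :
    (∀ x ∈ Ioo (0 : ℝ) 1, |u' x| ≤ (1 / γ) * M) ∧
    (∀ x ∈ Ioo (0 : ℝ) 1, |x * u'' x| ≤ 2 * M) := by
  obtain ⟨C, hC⟩ := hbdd
  have hγ0 : 0 < γ := by linarith
  have hu'_abs : ∀ x ∈ Ioo (0 : ℝ) 1, |u' x| ≤ M / γ :=
    fun x hx ↦ abs_le_div_of_degenerate_ode hγ one_pos hM hu'' heq hC hx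
  refine ⟨fun x hx ↦ by simpa only [one_div_mul_eq_div] using hu'_abs x hx, fun x hx ↦ ?_⟩
  calc |x * u'' x| = |f x - γ * u' x| := by rw [← heq x hx]; ring_nf
    _ ≤ |f x| + |γ * u' x| := abs_sub _ _
    _ = |f x| + γ * |u' x| := by rw [abs_mul, abs_of_pos hγ0]
    _ ≤ M + γ * (M / γ) := by gcongr; exacts [hM x hx, hu'_abs x hx]
    _ = 2 * M := by field_simp; ring

/-- Degenerate ODE estimate: if `x u'' + γ u' = f` on `(0,1)` with `γ > 1`, `f` continuous
and bounded by `M`, and `x u'` bounded, then `|u'| ≤ M/γ` and `|x u''| ≤ 2M` on `(0,1)`. -/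
theorem degenerate_ode_estimate
    (γ : ℝ) (hγ : 1 < γ)
    (f u u' u'' : ℝ → ℝ)
    (hf : ContinuousOn f (Ioo 0 1))
    (M : ℝ) (hM : ∀ x ∈ Ioo (0 : ℝ) 1, |f x| ≤ M)
    (hu' : ∀ x ∈ Ioo (0 : ℝ) 1, HasDerivAt u (u' x) x)
    (hu'' : ∀ x ∈ Ioo (0 : ℝ) 1, HasDerivAt u' (u'' x) x)
    (heq : ∀ x ∈ Ioo (0 : ℝ) 1, x * u'' x + γ * u' x = f x)
    (hbdd : ∃ C : ℝ, ∀ x ∈ Ioo (0 : ℝ) 1, |x * u' x| ≤ C) :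
    (∀ x ∈ Ioo (0 : ℝ) 1, |u' x| ≤ (1 / γ) * M) ∧
    (∀ x ∈ Ioo (0 : ℝ) 1, |x * u'' x| ≤ 2 * M) :=
  degenerate_ode_estimate_general γ hγ f u' u'' M hM hu'' heq hbdd
end

section
/- For every x' ∈ ℝ^{n−1} and all s, t > 0, the intrinsic distance on the upper half-space satisfies d((x', t), (x', s)) = 2 |√t − √s|. -/
open MeasureTheory Metric Set Filter Topology

noncomputable section

/-- The intrinsic distance on the upper half-space `ℝⁿ₊`, induced by the Riemannian
metric `g_x(v,w) = x_n⁻¹ v·w`: the infimum of the lengths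
`∫_a^b |γ'(t)| (γ_n(t))^{-1/2} dt` over `C¹` paths in `ℝⁿ₊` joining `x` to `y`. -/
def intrinsicDist (n : ℕ) (hn : 1 ≤ n)
    (x y : EuclideanSpace ℝ (Fin n)) : ℝ :=
  sInf {L : ℝ | ∃ (a b : ℝ) (γ : ℝ → EuclideanSpace ℝ (Fin n)),
    a ≤ b ∧ ContDiffOn ℝ 1 γ (Icc a b) ∧
    (∀ t ∈ Icc a b, 0 < γ t ⟨n - 1, by omega⟩) ∧
    γ a = x ∧ γ b = y ∧
    L = ∫ t in a..b, ‖derivWithin γ (Icc a b) t‖ *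
          (γ t ⟨n - 1, by omega⟩) ^ (-(1 : ℝ) / 2)}

/-! Since `γₙ' γₙ^{-1/2}` is the derivative of `2 √γₙ` and `|γₙ'| ≤ ‖γ'‖`, every admissible path
from `x` to `y` has length at least `2 |√xₙ - √yₙ|`. The straight segment from `x` to `y` is
vertical, so on it `‖γ'‖ = |γₙ'|` and `γₙ'` has constant sign: it attains the bound. -/

lemma rpow_neg_half_eq_inv_sqrt {x : ℝ} (hx : 0 ≤ x) : x ^ (-(1 : ℝ) / 2) = (√x)⁻¹ := by
  rw [neg_div, Real.rpow_neg hx, Real.sqrt_eq_rpow]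

lemma ContinuousOn.mul_rpow_neg_half {f g : ℝ → ℝ} {s : Set ℝ} (hg : ContinuousOn g s)
    (hf : ContinuousOn f s) (hpos : ∀ t ∈ s, 0 < f t) :
    ContinuousOn (fun t => g t * f t ^ (-(1 : ℝ) / 2)) s :=
  hg.mul (hf.rpow_const fun t ht => Or.inl (hpos t ht).ne')

theorem integral_deriv_mul_rpow_neg_half {f f' : ℝ → ℝ} {a b : ℝ} (hab : a ≤ b)
    (hf : ContinuousOn f (Icc a b)) (hf' : ContinuousOn f' (Icc a b))
    (hderiv : ∀ t ∈ Ioo a b, HasDerivAt f (f' t) t) (hpos : ∀ t ∈ Icc a b, 0 < f t) :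
    ∫ t in a..b, f' t * f t ^ (-(1 : ℝ) / 2) = 2 * (√(f b) - √(f a)) := by
  have hprim : ∀ t ∈ Ioo a b,
      HasDerivAt (fun u => 2 * √(f u)) (f' t * f t ^ (-(1 : ℝ) / 2)) t := by
    intro t ht
    have hft := hpos t (Ioo_subset_Icc_self ht)
    refine (((Real.hasDerivAt_sqrt hft.ne').comp t (hderiv t ht)).const_mul 2).congr_deriv ?_
    rw [rpow_neg_half_eq_inv_sqrt hft.le]
    field_simp
  have hint : IntervalIntegrable (fun t => f' t * f t ^ (-(1 : ℝ) / 2)) volume a b :=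
    ((hf'.mul_rpow_neg_half hf hpos).mono (uIcc_of_le hab).le).intervalIntegrable
  have hcont : ContinuousOn (fun u => 2 * √(f u)) (Icc a b) := continuousOn_const.mul hf.sqrt
  rw [intervalIntegral.integral_eq_sub_of_hasDerivAt_of_le hab hcont hprim hint, mul_sub]

section HalfSpace

variable {n : ℕ}

theorem two_mul_abs_sqrt_sub_le_integral (i : Fin n) {γ : ℝ → EuclideanSpace ℝ (Fin n)}
    {a b : ℝ} (hab : a ≤ b) (hγ : ContDiffOn ℝ 1 γ (Icc a b))
    (hpos : ∀ t ∈ Icc a b, 0 < γ t i) :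
    2 * |√(γ a i) - √(γ b i)| ≤
      ∫ t in a..b, ‖derivWithin γ (Icc a b) t‖ * γ t i ^ (-(1 : ℝ) / 2) := by
  rcases hab.eq_or_lt with rfl | hab'
  · simp
  set γ' := derivWithin γ (Icc a b)
  have hγ' : ContinuousOn γ' (Icc a b) :=
    hγ.continuousOn_derivWithin (uniqueDiffOn_Icc hab') le_rfl
  have hcoord : ∀ t ∈ Ioo a b, HasDerivAt (fun u => γ u i) (γ' t i) t := fun t ht =>
    (EuclideanSpace.proj (𝕜 := ℝ) i).hasFDerivAt.comp_hasDerivAt t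
      (((hγ.differentiableOn one_ne_zero t (Ioo_subset_Icc_self ht)).hasDerivWithinAt).hasDerivAt
        (Icc_mem_nhds ht.1 ht.2))
  have hγi : ContinuousOn (fun t => γ t i) (Icc a b) :=
    (EuclideanSpace.proj i).continuous.comp_continuousOn hγ.continuousOn
  have hγ'i : ContinuousOn (fun t => γ' t i) (Icc a b) :=
    (EuclideanSpace.proj i).continuous.comp_continuousOn hγ'
  calc 2 * |√(γ a i) - √(γ b i)|
      = |∫ t in a..b, γ' t i * γ t i ^ (-(1 : ℝ) / 2)| := by
        rw [integral_deriv_mul_rpow_neg_half hab hγi hγ'i hcoord hpos, abs_mul, abs_two,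
          abs_sub_comm]
    _ ≤ ∫ t in a..b, |γ' t i * γ t i ^ (-(1 : ℝ) / 2)| :=
        intervalIntegral.abs_integral_le_integral_abs hab
    _ ≤ ∫ t in a..b, ‖γ' t‖ * γ t i ^ (-(1 : ℝ) / 2) := by
        refine intervalIntegral.integral_mono_on hab ?_ ?_ fun t ht => ?_
        · exact (hγ'i.mul_rpow_neg_half hγi hpos).abs.intervalIntegrable_of_Icc hab
        · exact (hγ'.norm.mul_rpow_neg_half hγi hpos).intervalIntegrable_of_Icc hab
        · rw [abs_mul, abs_of_nonneg (Real.rpow_nonneg (hpos t ht).le _)]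
          exact mul_le_mul_of_nonneg_right (PiLp.norm_apply_le (γ' t) i)
            (Real.rpow_nonneg (hpos t ht).le _)

theorem integral_segment_eq_two_mul_abs_sqrt_sub (i : Fin n) {x y : EuclideanSpace ℝ (Fin n)}
    (hx : 0 < x i) (hy : 0 < y i) (hxy : ∀ j ≠ i, x j = y j) :
    ∫ t in (0 : ℝ)..1, ‖derivWithin (fun u => x + u • (y - x)) (Icc 0 1) t‖ *
        (x + t • (y - x)) i ^ (-(1 : ℝ) / 2) = 2 * |√(x i) - √(y i)| := by
  set c := y i - x i
  set f : ℝ → ℝ := fun t => x i + t * c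
  have hpos : ∀ t ∈ Icc (0 : ℝ) 1, 0 < f t := fun t ht =>
    (convex_Ioi (0 : ℝ)).add_smul_sub_mem hx hy ht
  have hsub : y - x = EuclideanSpace.single i c := by
    ext j
    by_cases hj : j = i
    · subst hj; simp [c]
    · simp [hj, hxy j hj]
  have hderiv : ∀ t ∈ Icc (0 : ℝ) 1,
      derivWithin (fun u => x + u • (y - x)) (Icc 0 1) t = y - x := fun t ht =>
    (((hasDerivAt_id t).smul_const (y - x)).const_add x).hasDerivWithinAt.derivWithin
      (uniqueDiffOn_Icc one_pos t ht) |>.trans (one_smul ℝ _)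
  have hf : ContinuousOn f (Icc 0 1) := by fun_prop
  have hprim := integral_deriv_mul_rpow_neg_half zero_le_one hf continuousOn_const
    (fun t _ => ((hasDerivAt_id t).mul_const c).const_add (x i) |>.congr_deriv (one_mul c)) hpos
  calc ∫ t in (0 : ℝ)..1, ‖derivWithin (fun u => x + u • (y - x)) (Icc 0 1) t‖ *
        (x + t • (y - x)) i ^ (-(1 : ℝ) / 2)
      = |c| * ∫ t in (0 : ℝ)..1, f t ^ (-(1 : ℝ) / 2) := by
        rw [← intervalIntegral.integral_const_mul]
        refine intervalIntegral.integral_congr fun t ht => ?_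
        rw [uIcc_of_le zero_le_one] at ht
        rw [hderiv t ht, hsub, PiLp.norm_single, Real.norm_eq_abs]
        simp [f, mul_comm t c]
    _ = |∫ t in (0 : ℝ)..1, c * f t ^ (-(1 : ℝ) / 2)| := by
        have hnonneg : 0 ≤ ∫ t in (0 : ℝ)..1, f t ^ (-(1 : ℝ) / 2) :=
          intervalIntegral.integral_nonneg zero_le_one fun t ht => Real.rpow_nonneg (hpos t ht).le _
        rw [intervalIntegral.integral_const_mul, abs_mul, abs_of_nonneg hnonneg]
    _ = 2 * |√(x i) - √(y i)| := by
        rw [hprim, abs_mul, abs_two, abs_sub_comm]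
        simp [f, c]

end HalfSpace

/-- On vertical lines the intrinsic distance of the upper half-space is
`d((x',t),(x',s)) = 2|√t - √s|`. -/
theorem intrinsicDist_vertical
    (n : ℕ) (hn : 1 ≤ n)
    (x y : EuclideanSpace ℝ (Fin n))
    (hx : 0 < x ⟨n - 1, by omega⟩) (hy : 0 < y ⟨n - 1, by omega⟩)
    (hxy : ∀ i : Fin n, (i : ℕ) < n - 1 → x i = y i) :
    intrinsicDist n hn x y =
      2 * |Real.sqrt (x ⟨n - 1, by omega⟩) - Real.sqrt (y ⟨n - 1, by omega⟩)| := by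
  set i : Fin n := ⟨n - 1, by omega⟩
  have hxy' : ∀ j ≠ i, x j = y j := fun j hj =>
    hxy j (by have := j.isLt; have : (j : ℕ) ≠ n - 1 := fun h => hj (Fin.ext h); omega)
  refine IsLeast.csInf_eq ⟨⟨0, 1, fun u => x + u • (y - x), zero_le_one, by fun_prop,
    fun t ht => (convex_Ioi (0 : ℝ)).add_smul_sub_mem hx hy ht, by simp, by simp,
    (integral_segment_eq_two_mul_abs_sqrt_sub i hx hy hxy').symm⟩, ?_⟩
  rintro _ ⟨a, b, γ, hab, hγ, hpos, rfl, rfl, rfl⟩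
  exact two_mul_abs_sqrt_sub_le_integral i hab hγ hpos
end
end
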